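/- Missing-edge-attribute case of Lemma 1: let G = (V, E) be a finite simple undirected graph with |V| ≥ 2, |E| ≥ 1, and no self-loops, let D be the reduction database constructed from G, let e_r = {v_i, v_j} ∈ E, and let p = {A_E = x_r, A_i = x_1, A_j = x_1}. If S ⊆ 𝒜 satisfies A_i ∈ S, A_j ∈ S, and A_E ∉ S, then c_D({A_i = x_1, A_j = x_1}) = |E| + 2·|E|² and Est(p, L_S(D)) = 2·|E| + 1, so Err(L_S(D), p) = |E| + 1 > 0. -/
import Mathlib


open Finset

namespace PatternLabel

/-- Attributes of the reduction database: `none` is the edge attribute `A_E`;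
`some v` is the vertex attribute `A_v`. -/
abbrev Attr (V : Type*) := Option V

/-- Values of the reduction database: `Sum.inl e` is the domain value `x_r` of `A_E`
corresponding to the edge `e = e_r`; `Sum.inr 0` is `x_1` and `Sum.inr 1` is `x_2`. -/
abbrev Val (V : Type*) := Sym2 V ⊕ Fin 2

/-- A tuple is a partial assignment of values to attributes (`Option.none` = undefined). -/
abbrev Tup (V : Type*) := Attr V → Option (Val V)

variable {V : Type*} [Fintype V] [DecidableEq V]

/-- The (at most two) endpoints of an unordered pair of vertices, as a finset. -/
def endpoints (z : Sym2 V) : Finset V := Finset.univ.filter (fun v => v ∈ z)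

/-- The tuple whose edge attribute `A_E` has value `x_e` for `eo = some e` (and is
undefined for `eo = none`), and whose vertex attribute `A_v` has value `x_{g v + 1}`
for `v ∈ P` and is undefined for `v ∉ P`. -/
def tupleOf (eo : Option (Sym2 V)) (P : Finset V) (g : V → Fin 2) : Tup V := fun A =>
  match A with
  | none => eo.map Sum.inl
  | some v => if v ∈ P then some (Sum.inr (g v)) else none

variable (G : SimpleGraph V) [DecidableRel G.Adj]

/-- `|E|`, the number of edges of the graph. -/
def numE : ℕ := G.edgeFinset.card

/-- The reduction database `D` built from the simple graph `G = (V, E)`: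
* for each edge `e_r = {v_i, v_j} ∈ E` and each `(p, q) ∈ {1,2}²`, `|E|` copies of the
  tuple defined only on `A_E, A_i, A_j` with `A_E = x_r`, `A_i = x_p`, `A_j = x_q`;
* for each unordered pair `{v_i, v_j}` of distinct vertices with `{v_i, v_j} ∉ E` and
  each `(p, q) ∈ {1,2}²`, `|E|` copies of the tuple defined only on `A_i, A_j` with
  `A_i = x_p`, `A_j = x_q`;
* for each edge `{v_i, v_j} ∈ E` and each `p ∈ {1,2}`, `2·|E|²` copies of the tuple
  defined only on `A_i, A_j` with `A_i = x_p`, `A_j = x_p`. -/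
def redDB : Multiset (Tup V) :=
  (∑ e ∈ G.edgeFinset,
      numE G • (Finset.univ.image fun g : V → Fin 2 => tupleOf (some e) (endpoints e) g).val)
    + (∑ z ∈ (Finset.univ : Finset V).sym2.filter
          (fun z => ¬ z.IsDiag ∧ z ∉ G.edgeFinset),
        numE G • (Finset.univ.image fun g : V → Fin 2 => tupleOf none (endpoints z) g).val)
    + (∑ e ∈ G.edgeFinset,
        (2 * numE G ^ 2) •
          (Finset.univ.image fun p : Fin 2 => tupleOf none (endpoints e) fun _ => p).val)

/-- The count `c_D(p)` of the pattern `p` with attribute set `T` and value assignment `f`: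
the number of tuples of `D` (with multiplicity) that are defined on every attribute of `T`
and agree with `f` there. -/
def cnt (D : Multiset (Tup V)) (T : Finset (Attr V)) (f : Attr V → Val V) : ℕ :=
  (D.filter fun t => ∀ A ∈ T, t A = some (f A)).card

/-- The count `c_D({A = w})` of tuples defined on attribute `A` with value `w` there. -/
def cnt1 (D : Multiset (Tup V)) (A : Attr V) (w : Val V) : ℕ :=
  (D.filter fun t => t A = some w).card

/-- The domain of an attribute: `Dom(A_v) = {x_1, x_2}` and `Dom(A_E) = {x_r : e_r ∈ E}`. -/
def dom (A : Attr V) : Finset (Val V) :=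
  match A with
  | none => G.edgeFinset.image Sum.inl
  | some _ => {Sum.inr 0, Sum.inr 1}

/-- The count estimate `Est(p, L_S(D))` of the pattern `p = (T, f)` using the label over
`S`: `c_D(p|_S) · ∏_{A ∈ Attr(p) \ S} c_D({A = p.A}) / (Σ_{a ∈ Dom(A)} c_D({A = a}))`. -/
def est (D : Multiset (Tup V)) (S T : Finset (Attr V)) (f : Attr V → Val V) : ℚ :=
  (cnt D (T ∩ S) f : ℚ) *
    ∏ A ∈ T \ S, (cnt1 D A (f A) : ℚ) / (∑ w ∈ dom G A, (cnt1 D A w : ℚ))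

/-- The estimation error `Err(L_S(D), p) = |c_D(p) − Est(p, L_S(D))|`. -/
def err (D : Multiset (Tup V)) (S T : Finset (Attr V)) (f : Attr V → Val V) : ℚ :=
  |(cnt D T f : ℚ) - est G D S T f|

/-- The attribute set `{A_E, A_i, A_j}` of the reduction pattern of the edge `e = {v_i, v_j}`. -/
def patT (e : Sym2 V) : Finset (Attr V) := insert none ((endpoints e).image some)

/-- The value assignment of the reduction pattern of the edge `e = e_r`:
`A_E = x_r` and `A_v = x_1` on vertex attributes. -/
def patF (e : Sym2 V) : Attr V → Val V := fun A =>
  match A with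
  | none => Sum.inl e
  | some _ => Sum.inr 0

/-- The label size `|L_S(D)|`: the number of patterns `q` with `Attr(q) = S` (assignments
of a value to each attribute of `S`) and `c_D(q) > 0`, where a tuple satisfies `q` if it is
defined on all attributes of `S` and agrees with `q` there. -/
def labelSize (D : Multiset (Tup V)) (S : Finset (Attr V)) : ℕ :=
  (Finset.univ.filter fun f : {A : Attr V // A ∈ S} → Val V =>
    0 < (D.filter fun t => ∀ A : {A : Attr V // A ∈ S}, t A.1 = some (f A)).card).card

/-- `Err(L_S(D), 𝒫)`: the maximum error of the label over `S` with respect to the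
reduction's pattern set `𝒫 = { {A_E = x_r, A_i = x_1, A_j = x_1} : e_r = {v_i, v_j} ∈ E }`. -/
def errSet (D : Multiset (Tup V)) (S : Finset (Attr V)) (hE : G.edgeFinset.Nonempty) : ℚ :=
  G.edgeFinset.sup' hE fun e => err G D S (patT e) (patF e)


/-! ### Auxiliary lemmas -/

lemma mem_endpoints {z : Sym2 V} {v : V} : v ∈ endpoints z ↔ v ∈ z := by
  simp [endpoints]

lemma endpoints_mk (a b : V) : endpoints s(a, b) = {a, b} := by
  ext v; simp [mem_endpoints, Sym2.mem_iff, Finset.mem_insert]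

lemma tupleOf_apply_some (eo : Option (Sym2 V)) (P : Finset V) (g : V → Fin 2) (v : V) :
    tupleOf eo P g (some v) = if v ∈ P then some (Sum.inr (g v)) else none := rfl

lemma tupleOf_apply_none (eo : Option (Sym2 V)) (P : Finset V) (g : V → Fin 2) :
    tupleOf eo P g none = eo.map Sum.inl := rfl

lemma patF_some (e : Sym2 V) (v : V) : patF e (some v) = Sum.inr 0 := rfl

lemma patF_none (e : Sym2 V) : patF e none = Sum.inl e := rfl

lemma tupleOf_congr {eo : Option (Sym2 V)} {P : Finset V} {g g' : V → Fin 2}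
    (h : ∀ v ∈ P, g v = g' v) : tupleOf eo P g = tupleOf eo P g' := by
  funext A
  cases A with
  | none => rfl
  | some v =>
    rw [tupleOf_apply_some, tupleOf_apply_some]
    by_cases hv : v ∈ P
    · simp [hv, h v hv]
    · simp [hv]

lemma sat_iff (eo : Option (Sym2 V)) (P : Finset V) (g : V → Fin 2) (v : V) (w : Fin 2) :
    tupleOf eo P g (some v) = some (Sum.inr w) ↔ v ∈ P ∧ g v = w := by
  by_cases hv : v ∈ P <;> simp [tupleOf_apply_some, hv]

lemma card_filter_sum {α β : Type*} (s : Finset α) (f : α → Multiset β)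
    (P : β → Prop) [DecidablePred P] :
    ((∑ a ∈ s, f a).filter P).card = ∑ a ∈ s, ((f a).filter P).card := by
  classical
  induction s using Finset.cons_induction with
  | empty => simp
  | cons a s ha ih => simp [Finset.sum_insert ha, Multiset.filter_add, ih]

variable (G : SimpleGraph V) [DecidableRel G.Adj]

lemma card_filter_redDB (P : Tup V → Prop) [DecidablePred P] :
    ((redDB G).filter P).card =
      (∑ e ∈ G.edgeFinset, numE G *
        ((Finset.univ.image fun g : V → Fin 2 => tupleOf (some e) (endpoints e) g).filter
          P).card)
      + (∑ z ∈ (Finset.univ : Finset V).sym2.filter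
            (fun z => ¬ z.IsDiag ∧ z ∉ G.edgeFinset), numE G *
        ((Finset.univ.image fun g : V → Fin 2 => tupleOf none (endpoints z) g).filter P).card)
      + (∑ e ∈ G.edgeFinset, (2 * numE G ^ 2) *
        ((Finset.univ.image fun p : Fin 2 => tupleOf none (endpoints e) fun _ => p).filter
          P).card) := by
  have key : ∀ (s : Finset (Tup V)), ((s.val).filter P).card = (s.filter P).card := by
    intro s; rfl
  simp only [redDB, Multiset.filter_add, Multiset.card_add, card_filter_sum,
    Multiset.filter_nsmul, Multiset.card_nsmul, key]

lemma card_image_tupleOf (eo : Option (Sym2 V)) (a b : V) (hab : a ≠ b) :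
    (Finset.univ.image fun g : V → Fin 2 => tupleOf eo ({a, b} : Finset V) g).card = 4 := by
  classical
  have himg : (Finset.univ.image fun g : V → Fin 2 => tupleOf eo ({a, b} : Finset V) g)
      = Finset.univ.image (fun pq : Fin 2 × Fin 2 =>
          tupleOf eo ({a, b} : Finset V) fun v => if v = a then pq.1 else pq.2) := by
    ext t
    simp only [Finset.mem_image, Finset.mem_univ, true_and]
    constructor
    · rintro ⟨g, rfl⟩
      refine ⟨(g a, g b), tupleOf_congr ?_⟩
      intro v hv
      rcases Finset.mem_insert.mp hv with rfl | hv
      · simp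
      · rcases Finset.mem_singleton.mp hv with rfl
        simp [hab.symm]
    · rintro ⟨pq, rfl⟩
      exact ⟨fun v => if v = a then pq.1 else pq.2, rfl⟩
  rw [himg, Finset.card_image_of_injective _ ?_]
  · simp
  · intro pq pq' h
    have h1 := congrFun h (some a)
    have h2 := congrFun h (some b)
    simp only [] at h1 h2
    rw [tupleOf_apply_some, tupleOf_apply_some] at h1 h2
    simp [Finset.mem_insert, hab.symm] at h1 h2
    exact Prod.ext h1 h2

lemma filter_pair_eq (eo : Option (Sym2 V)) {i j : V} :
    ((Finset.univ.image fun g : V → Fin 2 => tupleOf eo (endpoints s(i, j)) g).filter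
      (fun t => t (some i) = some (Sum.inr 0) ∧ t (some j) = some (Sum.inr 0)))
    = {tupleOf eo (endpoints s(i, j)) (fun _ => 0)} := by
  ext t
  simp only [Finset.mem_filter, Finset.mem_image, Finset.mem_univ, true_and,
    Finset.mem_singleton]
  constructor
  · rintro ⟨⟨g, rfl⟩, h1, h2⟩
    apply tupleOf_congr
    intro v hv
    rw [mem_endpoints, Sym2.mem_iff] at hv
    rcases hv with rfl | rfl
    · exact ((sat_iff _ _ _ _ _).mp h1).2
    · exact ((sat_iff _ _ _ _ _).mp h2).2
  · rintro rfl
    refine ⟨⟨fun _ => 0, rfl⟩, ?_, ?_⟩ <;>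
      · rw [sat_iff]
        exact ⟨by rw [mem_endpoints]; simp, rfl⟩

lemma filter_pair_const_eq {i j : V} :
    ((Finset.univ.image fun p : Fin 2 => tupleOf none (endpoints s(i, j)) fun _ => p).filter
      (fun t => t (some i) = some (Sum.inr 0) ∧ t (some j) = some (Sum.inr 0)))
    = {tupleOf none (endpoints s(i, j)) (fun _ => 0)} := by
  ext t
  simp only [Finset.mem_filter, Finset.mem_image, Finset.mem_univ, true_and,
    Finset.mem_singleton]
  constructor
  · rintro ⟨⟨p, rfl⟩, h1, h2⟩
    obtain rfl := ((sat_iff _ _ _ _ _).mp h1).2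
    rfl
  · rintro rfl
    refine ⟨⟨0, rfl⟩, ?_, ?_⟩ <;>
      · rw [sat_iff]
        exact ⟨by rw [mem_endpoints]; simp, rfl⟩

lemma filter_pair_empty {z : Sym2 V} {i j : V} (h : ¬ (i ∈ z ∧ j ∈ z))
    (eo : Option (Sym2 V)) :
    ((Finset.univ.image fun g : V → Fin 2 => tupleOf eo (endpoints z) g).filter
      (fun t => t (some i) = some (Sum.inr 0) ∧ t (some j) = some (Sum.inr 0))) = ∅ := by
  rw [Finset.filter_eq_empty_iff]
  intro t ht
  simp only [Finset.mem_image, Finset.mem_univ, true_and] at ht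
  obtain ⟨g, rfl⟩ := ht
  rintro ⟨h1, h2⟩
  exact h ⟨mem_endpoints.mp ((sat_iff _ _ _ _ _).mp h1).1,
    mem_endpoints.mp ((sat_iff _ _ _ _ _).mp h2).1⟩

lemma filter_pair_const_empty {z : Sym2 V} {i j : V} (h : ¬ (i ∈ z ∧ j ∈ z)) :
    ((Finset.univ.image fun p : Fin 2 => tupleOf none (endpoints z) fun _ => p).filter
      (fun t => t (some i) = some (Sum.inr 0) ∧ t (some j) = some (Sum.inr 0))) = ∅ := by
  rw [Finset.filter_eq_empty_iff]
  intro t ht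
  simp only [Finset.mem_image, Finset.mem_univ, true_and] at ht
  obtain ⟨p, rfl⟩ := ht
  rintro ⟨h1, h2⟩
  exact h ⟨mem_endpoints.mp ((sat_iff _ _ _ _ _).mp h1).1,
    mem_endpoints.mp ((sat_iff _ _ _ _ _).mp h2).1⟩

lemma cnt_pair (i j : V) (hadj : G.Adj i j) :
    cnt (redDB G) ({some i, some j} : Finset (Attr V)) (patF s(i, j))
      = numE G + 2 * numE G ^ 2 := by
  classical
  have hne := hadj.ne
  have he0 : s(i, j) ∈ G.edgeFinset := by
    rw [SimpleGraph.mem_edgeFinset]; exact hadj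
  have hP : ∀ t : Tup V,
      (∀ A ∈ ({some i, some j} : Finset (Attr V)), t A = some (patF s(i, j) A))
      ↔ (t (some i) = some (Sum.inr 0) ∧ t (some j) = some (Sum.inr 0)) := by
    intro t
    constructor
    · intro h
      exact ⟨h (some i) (by simp), h (some j) (by simp)⟩
    · rintro ⟨h1, h2⟩ A hA
      rcases Finset.mem_insert.mp hA with rfl | hA
      · exact h1
      · rcases Finset.mem_singleton.mp hA with rfl
        exact h2
  simp only [cnt]
  rw [card_filter_redDB]
  simp only [hP]
  have hs1 : ∀ e ∈ G.edgeFinset,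
      numE G * ((Finset.univ.image fun g : V → Fin 2 =>
          tupleOf (some e) (endpoints e) g).filter
        (fun t => t (some i) = some (Sum.inr 0) ∧ t (some j) = some (Sum.inr 0))).card
      = if e = s(i, j) then numE G else 0 := by
    intro e _
    by_cases hee : e = s(i, j)
    · subst hee
      rw [filter_pair_eq, if_pos rfl]
      simp
    · rw [filter_pair_empty (fun hm => hee ((Sym2.mem_and_mem_iff hne).mp hm)), if_neg hee]
      simp
  have hs2 : ∀ z ∈ (Finset.univ : Finset V).sym2.filter
        (fun z => ¬ z.IsDiag ∧ z ∉ G.edgeFinset),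
      numE G * ((Finset.univ.image fun g : V → Fin 2 =>
          tupleOf none (endpoints z) g).filter
        (fun t => t (some i) = some (Sum.inr 0) ∧ t (some j) = some (Sum.inr 0))).card
      = 0 := by
    intro z hz
    rw [Finset.mem_filter] at hz
    rw [filter_pair_empty (fun hm => hz.2.2 (by
      rw [(Sym2.mem_and_mem_iff hne).mp hm]; exact he0))]
    simp
  have hs3 : ∀ e ∈ G.edgeFinset,
      (2 * numE G ^ 2) * ((Finset.univ.image fun p : Fin 2 =>
          tupleOf none (endpoints e) fun _ => p).filter
        (fun t => t (some i) = some (Sum.inr 0) ∧ t (some j) = some (Sum.inr 0))).card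
      = if e = s(i, j) then 2 * numE G ^ 2 else 0 := by
    intro e _
    by_cases hee : e = s(i, j)
    · subst hee
      rw [filter_pair_const_eq, if_pos rfl]
      simp
    · rw [filter_pair_const_empty (fun hm => hee ((Sym2.mem_and_mem_iff hne).mp hm)),
        if_neg hee]
      simp
  rw [Finset.sum_congr rfl hs1, Finset.sum_congr rfl hs2, Finset.sum_congr rfl hs3]
  simp [Finset.sum_ite_eq' G.edgeFinset, he0]

lemma cnt_full (i j : V) (hadj : G.Adj i j) :
    cnt (redDB G) (patT s(i, j)) (patF s(i, j)) = numE G := by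
  classical
  have hne := hadj.ne
  have he0 : s(i, j) ∈ G.edgeFinset := by
    rw [SimpleGraph.mem_edgeFinset]; exact hadj
  have hT : patT s(i, j) = ({none, some i, some j} : Finset (Attr V)) := by
    rw [patT, endpoints_mk]
    simp [Finset.image_insert, Finset.image_singleton]
  have hP : ∀ t : Tup V,
      (∀ A ∈ patT s(i, j), t A = some (patF s(i, j) A))
      ↔ (t none = some (Sum.inl s(i, j)) ∧ t (some i) = some (Sum.inr 0)
          ∧ t (some j) = some (Sum.inr 0)) := by
    intro t
    rw [hT]
    constructor
    · intro h
      exact ⟨h none (by simp), h (some i) (by simp), h (some j) (by simp)⟩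
    · rintro ⟨h0, h1, h2⟩ A hA
      rcases Finset.mem_insert.mp hA with rfl | hA
      · exact h0
      rcases Finset.mem_insert.mp hA with rfl | hA
      · exact h1
      rcases Finset.mem_singleton.mp hA with rfl
      exact h2
  simp only [cnt]
  rw [card_filter_redDB]
  simp only [hP]
  have hs1 : ∀ e ∈ G.edgeFinset,
      numE G * ((Finset.univ.image fun g : V → Fin 2 =>
          tupleOf (some e) (endpoints e) g).filter
        (fun t => t none = some (Sum.inl s(i, j)) ∧ t (some i) = some (Sum.inr 0)
          ∧ t (some j) = some (Sum.inr 0))).card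
      = if e = s(i, j) then numE G else 0 := by
    intro e _
    by_cases hee : e = s(i, j)
    · subst hee
      rw [if_pos rfl]
      have hcongr : ∀ t ∈ (Finset.univ.image fun g : V → Fin 2 =>
          tupleOf (some s(i, j)) (endpoints s(i, j)) g),
          ((t none = some (Sum.inl s(i, j)) ∧ t (some i) = some (Sum.inr 0)
            ∧ t (some j) = some (Sum.inr 0))
          ↔ (t (some i) = some (Sum.inr 0) ∧ t (some j) = some (Sum.inr 0))) := by
        intro t ht
        simp only [Finset.mem_image, Finset.mem_univ, true_and] at ht
        obtain ⟨g, rfl⟩ := ht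
        rw [tupleOf_apply_none]
        simp
      rw [Finset.filter_congr hcongr, filter_pair_eq]
      simp
    · rw [if_neg hee]
      have hempty : ((Finset.univ.image fun g : V → Fin 2 =>
          tupleOf (some e) (endpoints e) g).filter
          (fun t => t none = some (Sum.inl s(i, j)) ∧ t (some i) = some (Sum.inr 0)
            ∧ t (some j) = some (Sum.inr 0))) = ∅ := by
        rw [Finset.filter_eq_empty_iff]
        intro t ht
        simp only [Finset.mem_image, Finset.mem_univ, true_and] at ht
        obtain ⟨g, rfl⟩ := ht
        rintro ⟨h0, h1, h2⟩
        exact hee ((Sym2.mem_and_mem_iff hne).mp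
          ⟨mem_endpoints.mp ((sat_iff _ _ _ _ _).mp h1).1,
            mem_endpoints.mp ((sat_iff _ _ _ _ _).mp h2).1⟩)
      rw [hempty]
      simp
  have hs2 : ∀ z ∈ (Finset.univ : Finset V).sym2.filter
        (fun z => ¬ z.IsDiag ∧ z ∉ G.edgeFinset),
      numE G * ((Finset.univ.image fun g : V → Fin 2 =>
          tupleOf none (endpoints z) g).filter
        (fun t => t none = some (Sum.inl s(i, j)) ∧ t (some i) = some (Sum.inr 0)
          ∧ t (some j) = some (Sum.inr 0))).card
      = 0 := by
    intro z _
    have hempty : ((Finset.univ.image fun g : V → Fin 2 =>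
        tupleOf none (endpoints z) g).filter
        (fun t => t none = some (Sum.inl s(i, j)) ∧ t (some i) = some (Sum.inr 0)
          ∧ t (some j) = some (Sum.inr 0))) = ∅ := by
      rw [Finset.filter_eq_empty_iff]
      intro t ht
      simp only [Finset.mem_image, Finset.mem_univ, true_and] at ht
      obtain ⟨g, rfl⟩ := ht
      rintro ⟨h0, -, -⟩
      rw [tupleOf_apply_none] at h0
      simp at h0
    rw [hempty]
    simp
  have hs3 : ∀ e ∈ G.edgeFinset,
      (2 * numE G ^ 2) * ((Finset.univ.image fun p : Fin 2 =>
          tupleOf none (endpoints e) fun _ => p).filter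
        (fun t => t none = some (Sum.inl s(i, j)) ∧ t (some i) = some (Sum.inr 0)
          ∧ t (some j) = some (Sum.inr 0))).card
      = 0 := by
    intro e _
    have hempty : ((Finset.univ.image fun p : Fin 2 =>
        tupleOf none (endpoints e) fun _ => p).filter
        (fun t => t none = some (Sum.inl s(i, j)) ∧ t (some i) = some (Sum.inr 0)
          ∧ t (some j) = some (Sum.inr 0))) = ∅ := by
      rw [Finset.filter_eq_empty_iff]
      intro t ht
      simp only [Finset.mem_image, Finset.mem_univ, true_and] at ht
      obtain ⟨p, rfl⟩ := ht
      rintro ⟨h0, -, -⟩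
      rw [tupleOf_apply_none] at h0
      simp at h0
    rw [hempty]
    simp
  rw [Finset.sum_congr rfl hs1, Finset.sum_congr rfl hs2, Finset.sum_congr rfl hs3]
  simp [Finset.sum_ite_eq' G.edgeFinset, he0]

lemma cnt1_none_eq (e' : Sym2 V) (he' : e' ∈ G.edgeFinset) :
    cnt1 (redDB G) none (Sum.inl e') = 4 * numE G := by
  classical
  revert he'
  induction e' using Sym2.ind with
  | _ a b =>
    intro he'
    have hab : a ≠ b := by
      have : G.Adj a b := by rwa [SimpleGraph.mem_edgeFinset] at he'
      exact this.ne
    simp only [cnt1]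
    rw [card_filter_redDB]
    have hs1 : ∀ e ∈ G.edgeFinset,
        numE G * ((Finset.univ.image fun g : V → Fin 2 =>
            tupleOf (some e) (endpoints e) g).filter
          (fun t => t none = some (Sum.inl s(a, b)))).card
        = if e = s(a, b) then numE G * 4 else 0 := by
      intro e _
      by_cases hee : e = s(a, b)
      · subst hee
        rw [if_pos rfl, Finset.filter_true_of_mem, endpoints_mk,
          card_image_tupleOf _ _ _ hab]
        intro t ht
        simp only [Finset.mem_image, Finset.mem_univ, true_and] at ht
        obtain ⟨g, rfl⟩ := ht
        rfl
      · rw [if_neg hee]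
        have hempty : ((Finset.univ.image fun g : V → Fin 2 =>
            tupleOf (some e) (endpoints e) g).filter
            (fun t => t none = some (Sum.inl s(a, b)))) = ∅ := by
          rw [Finset.filter_eq_empty_iff]
          intro t ht
          simp only [Finset.mem_image, Finset.mem_univ, true_and] at ht
          obtain ⟨g, rfl⟩ := ht
          rw [tupleOf_apply_none]
          simp [hee]
        rw [hempty]
        simp
    have hs2 : ∀ z ∈ (Finset.univ : Finset V).sym2.filter
          (fun z => ¬ z.IsDiag ∧ z ∉ G.edgeFinset),
        numE G * ((Finset.univ.image fun g : V → Fin 2 =>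
            tupleOf none (endpoints z) g).filter
          (fun t => t none = some (Sum.inl s(a, b)))).card
        = 0 := by
      intro z _
      have hempty : ((Finset.univ.image fun g : V → Fin 2 =>
          tupleOf none (endpoints z) g).filter
          (fun t => t none = some (Sum.inl s(a, b)))) = ∅ := by
        rw [Finset.filter_eq_empty_iff]
        intro t ht
        simp only [Finset.mem_image, Finset.mem_univ, true_and] at ht
        obtain ⟨g, rfl⟩ := ht
        rw [tupleOf_apply_none]
        simp
      rw [hempty]
      simp
    have hs3 : ∀ e ∈ G.edgeFinset,
        (2 * numE G ^ 2) * ((Finset.univ.image fun p : Fin 2 =>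
            tupleOf none (endpoints e) fun _ => p).filter
          (fun t => t none = some (Sum.inl s(a, b)))).card
        = 0 := by
      intro e _
      have hempty : ((Finset.univ.image fun p : Fin 2 =>
          tupleOf none (endpoints e) fun _ => p).filter
          (fun t => t none = some (Sum.inl s(a, b)))) = ∅ := by
        rw [Finset.filter_eq_empty_iff]
        intro t ht
        simp only [Finset.mem_image, Finset.mem_univ, true_and] at ht
        obtain ⟨p, rfl⟩ := ht
        rw [tupleOf_apply_none]
        simp
      rw [hempty]
      simp
    rw [Finset.sum_congr rfl hs1, Finset.sum_congr rfl hs2, Finset.sum_congr rfl hs3]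
    simp only [Finset.sum_ite_eq' G.edgeFinset, he', if_pos, Finset.sum_const_zero]
    ring

lemma sum_dom_none : ∑ w ∈ dom G none, cnt1 (redDB G) none w = 4 * numE G ^ 2 := by
  classical
  have hdom : dom G none = G.edgeFinset.image Sum.inl := rfl
  rw [hdom, Finset.sum_image (fun x _ y _ h => Sum.inl.inj h),
    Finset.sum_congr rfl (fun e he => cnt1_none_eq G e he)]
  rw [Finset.sum_const]
  have : G.edgeFinset.card = numE G := rfl
  rw [this]
  simp [mul_comm]
  ring

/-- Missing-edge-attribute case of Lemma 1: for an edge `e_r = {v_i, v_j} ∈ E`, the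
pattern `p = {A_E = x_r, A_i = x_1, A_j = x_1}`, and a label attribute set `S` with
`A_i ∈ S`, `A_j ∈ S`, `A_E ∉ S`: `c_D({A_i = x_1, A_j = x_1}) = |E| + 2·|E|²` and
`Est(p, L_S(D)) = 2·|E| + 1`, so `Err(L_S(D), p) = |E| + 1 > 0`. -/
theorem redDB_missing_edge_attr_case {V : Type*} [Fintype V] [DecidableEq V]
    (G : SimpleGraph V) [DecidableRel G.Adj]
    (hV : 2 ≤ Fintype.card V) (hE : 1 ≤ numE G)
    (i j : V) (hadj : G.Adj i j)
    (S : Finset (Attr V)) (hiS : some i ∈ S) (hjS : some j ∈ S) (hES : none ∉ S) :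
    cnt (redDB G) ({some i, some j} : Finset (Attr V)) (patF s(i, j))
        = numE G + 2 * numE G ^ 2 ∧
    est G (redDB G) S (patT s(i, j)) (patF s(i, j)) = 2 * (numE G : ℚ) + 1 ∧
    err G (redDB G) S (patT s(i, j)) (patF s(i, j)) = (numE G : ℚ) + 1 ∧
    0 < err G (redDB G) S (patT s(i, j)) (patF s(i, j)) := by
  classical
  have he0 : s(i, j) ∈ G.edgeFinset := by
    rw [SimpleGraph.mem_edgeFinset]; exact hadj
  have hc2 := cnt_pair G i j hadj
  have hc3 := cnt_full G i j hadj
  have hc1 : cnt1 (redDB G) none (Sum.inl s(i, j)) = 4 * numE G := cnt1_none_eq G _ he0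
  have hsum := sum_dom_none G
  have hT : patT s(i, j) = ({none, some i, some j} : Finset (Attr V)) := by
    rw [patT, endpoints_mk]
    simp [Finset.image_insert, Finset.image_singleton]
  have hTi : patT s(i, j) ∩ S = ({some i, some j} : Finset (Attr V)) := by
    rw [hT]; ext A
    simp only [Finset.mem_inter, Finset.mem_insert, Finset.mem_singleton]
    constructor
    · rintro ⟨(rfl | rfl | rfl), hS⟩
      · exact absurd hS hES
      · exact Or.inl rfl
      · exact Or.inr rfl
    · rintro (rfl | rfl)
      · exact ⟨Or.inr (Or.inl rfl), hiS⟩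
      · exact ⟨Or.inr (Or.inr rfl), hjS⟩
  have hTd : patT s(i, j) \ S = ({none} : Finset (Attr V)) := by
    rw [hT]; ext A
    simp only [Finset.mem_sdiff, Finset.mem_insert, Finset.mem_singleton]
    constructor
    · rintro ⟨(rfl | rfl | rfl), hS⟩
      · rfl
      · exact absurd hiS hS
      · exact absurd hjS hS
    · rintro rfl
      exact ⟨Or.inl rfl, hES⟩
  have hm1 : (1 : ℚ) ≤ (numE G : ℚ) := by exact_mod_cast hE
  have hm0 : (0 : ℚ) < (numE G : ℚ) := by linarith
  have hest : est G (redDB G) S (patT s(i, j)) (patF s(i, j)) = 2 * (numE G : ℚ) + 1 := by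
    simp only [est]
    rw [hTi, hTd, Finset.prod_singleton, hc2, patF_none, hc1]
    have hsq : (∑ w ∈ dom G none, ((cnt1 (redDB G) none w : ℚ)))
        = 4 * (numE G : ℚ) ^ 2 := by
      rw [← Nat.cast_sum, hsum]
      push_cast
      ring
    rw [hsq]
    push_cast
    field_simp
    ring
  have herr : err G (redDB G) S (patT s(i, j)) (patF s(i, j)) = (numE G : ℚ) + 1 := by
    simp only [err]
    rw [hc3, hest]
    have hh : ((numE G : ℚ)) - (2 * (numE G : ℚ) + 1) = -((numE G : ℚ) + 1) := by ring
    rw [hh, abs_neg, abs_of_nonneg (by positivity)]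
  exact ⟨hc2, hest, herr, by rw [herr]; positivity⟩

end PatternLabel
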